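/- arXiv:2001.08875 — 5 statements merged into one kernel-verified Lean document; each statement's English description precedes it below -/
import Mathlib

section
/- Let p be a prime, s, e positive integers, and let D = {d_1, d_2, …, d_n} be a subset of F_{p^s}^e \ {(0,…,0)}. Let C_D = {(Tr(x·d_1), Tr(x·d_2), …, Tr(x·d_n)) : x ∈ F_{p^s}^e} be the p-ary linear code of length n, where Tr is the trace from F_{p^s} to F_p and x·d is the standard inner product on F_{p^s}^e. If the dimension of C_D over F_p equals es, then for every r with 1 ≤ r ≤ es, the r-th generalized Hamming weight satisfies d_r(C_D) = n − max{|D ∩ H| : H an (es−r)-dimensional F_p-subspace of F_{p^s}^e}. -/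
/-! The trace dot product `B(x, y) = ∑ Tr(xᵢ yᵢ)` is a nondegenerate symmetric `F_p`-bilinear form
on `K^e`, and the code map is `x ↦ (B(x, d))_{d ∈ D}`. Since it is injective, the `r`-dimensional
subcodes are the images `φ(W)` of the `r`-dimensional subspaces `W`, and the support of `φ(W)` is
the set of `d ∈ D` outside `W^⊥`. As `W ↦ W^⊥` is a bijection onto the subspaces of dimension
`es - r`, minimising the support means maximising `|D ∩ H|` over those subspaces `H`. -/

open scoped BigOperators

noncomputable section

namespace Paper0

/-- The `r`-th generalized Hamming weight of a linear code `C ⊆ F_p^ι`: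
the minimum support size of an `r`-dimensional subspace of `C`. -/
def GHW (p : ℕ) {ι : Type*} (C : Submodule (ZMod p) (ι → ZMod p)) (r : ℕ) : ℕ :=
  sInf {n | ∃ V : Submodule (ZMod p) (ι → ZMod p), V ≤ C ∧
    Module.finrank (ZMod p) ↥V = r ∧ {i : ι | ∃ c ∈ V, c i ≠ 0}.ncard = n}

/-- The `F_p`-linear map sending `x ∈ K^e` to the word `(Tr(x·d))_{d ∈ D}`;
its range is the code `C_D`. -/
def codeMap (p e : ℕ) {K : Type*} [Field K] [Fintype K] [Algebra (ZMod p) K]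
    (D : Finset (Fin e → K)) :
    (Fin e → K) →ₗ[ZMod p] (↥D → ZMod p) :=
  LinearMap.pi fun d =>
    (Algebra.trace (ZMod p) K).comp
      (∑ i, (LinearMap.mulLeft (ZMod p) ((d : Fin e → K) i)).comp (LinearMap.proj i))

open Module
open LinearMap (BilinForm)

theorem sInf_image_tsub_eq_tsub_sSup {T : Set ℕ} (hne : T.Nonempty) (hbdd : BddAbove T)
    (c : ℕ) : sInf ((c - ·) '' T) = c - sSup T := by
  apply le_antisymm
  · exact Nat.sInf_le ⟨sSup T, Nat.sSup_mem hne hbdd, rfl⟩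
  · refine le_csInf (hne.image _) ?_
    rintro _ ⟨k, hk, rfl⟩
    exact Nat.sub_le_sub_left (le_csSup hbdd hk) _

theorem ncard_compl_setOf_val_mem {α : Type*} (D : Finset α) (S : Set α) :
    {d : D | (d : α) ∈ S}ᶜ.ncard = D.card - {x | x ∈ D ∧ x ∈ S}.ncard := by
  have hval : Subtype.val '' {d : D | (d : α) ∈ S} = {x | x ∈ D ∧ x ∈ S} := by
    ext x
    simp [and_comm]
  have hcompl := Set.ncard_add_ncard_compl {d : D | (d : α) ∈ S}
  rw [← hval, Set.ncard_image_of_injective _ Subtype.val_injective]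
  simp only [Nat.card_eq_fintype_card, Fintype.card_coe] at hcompl
  omega

theorem ncard_setOf_mem_and_le_card {α : Type*} (D : Finset α) (S : Set α) :
    {x | x ∈ D ∧ x ∈ S}.ncard ≤ D.card := by
  calc {x | x ∈ D ∧ x ∈ S}.ncard ≤ (D : Set α).ncard :=
        Set.ncard_le_ncard (fun _ hx => hx.1) D.finite_toSet
    _ = D.card := Set.ncard_coe_finset D

theorem exists_submodule_finrank_eq {F V : Type*} [Field F] [AddCommGroup V] [Module F V]
    [FiniteDimensional F V] {m : ℕ} (hm : m ≤ finrank F V) :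
    ∃ W : Submodule F V, finrank F W = m := by
  let b := Module.finBasis F V
  let v : Fin m → V := fun i => b (Fin.castLE hm i)
  have hv : LinearIndependent F v := b.linearIndependent.comp _ (Fin.castLE_injective hm)
  exact ⟨Submodule.span F (Set.range v), by rw [finrank_span_eq_card hv, Fintype.card_fin]⟩

theorem injective_of_finrank_range_eq {F V W : Type*} [Field F] [AddCommGroup V] [Module F V]
    [FiniteDimensional F V] [AddCommGroup W] [Module F W] {f : V →ₗ[F] W}
    (hf : finrank F (LinearMap.range f) = finrank F V) : Function.Injective f := by
  have hker := LinearMap.finrank_range_add_finrank_ker f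
  rw [← LinearMap.ker_eq_bot, ← Submodule.finrank_eq_zero]
  omega

section DefiningSet

variable {F V : Type*} [Field F] [AddCommGroup V] [Module F V] {B : BilinForm F V}
  {D : Finset V} {φ : V →ₗ[F] (D → F)}

theorem setOf_support_map_eq (hφ : ∀ x (d : D), φ x d = B x d) (W : Submodule F V) :
    {d : D | ∃ c ∈ W.map φ, c d ≠ 0} = {d : D | (d : V) ∈ B.orthogonal W}ᶜ := by
  ext d
  simp only [Set.mem_ofPred_eq, Set.mem_compl_iff, Submodule.mem_map,
    LinearMap.BilinForm.mem_orthogonal_iff, not_forall]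
  constructor
  · rintro ⟨_, ⟨x, hx, rfl⟩, hc⟩
    exact ⟨x, hx, by rwa [← hφ]⟩
  · rintro ⟨x, hx, hc⟩
    exact ⟨φ x, ⟨x, hx, rfl⟩, by rwa [hφ]⟩

theorem ncard_support_map (hφ : ∀ x (d : D), φ x d = B x d) (W : Submodule F V) :
    {d : D | ∃ c ∈ W.map φ, c d ≠ 0}.ncard =
      D.card - {x | x ∈ D ∧ x ∈ B.orthogonal W}.ncard := by
  rw [setOf_support_map_eq hφ]
  exact ncard_compl_setOf_val_mem D (B.orthogonal W)

variable [FiniteDimensional F V]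

theorem setOf_support_subcode_eq (hB : B.Nondegenerate) (hBr : B.IsRefl)
    (hφ : ∀ x (d : D), φ x d = B x d) (hinj : Function.Injective φ) {r : ℕ}
    (hr : r ≤ finrank F V) :
    {n | ∃ C : Submodule F (D → F), C ≤ LinearMap.range φ ∧ finrank F C = r ∧
        {d : D | ∃ c ∈ C, c d ≠ 0}.ncard = n} =
      (D.card - ·) '' {k | ∃ H : Submodule F V, finrank F H = finrank F V - r ∧
        {x | x ∈ D ∧ x ∈ H}.ncard = k} := by
  have hfinrank_map (W : Submodule F V) : finrank F (W.map φ) = finrank F W :=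
    (Submodule.equivMapOfInjective φ hinj W).symm.finrank_eq
  ext n
  constructor
  · rintro ⟨C, hC, hCr, rfl⟩
    have hmap : (C.comap φ).map φ = C := Submodule.map_comap_eq_self hC
    refine ⟨_, ⟨B.orthogonal (C.comap φ), ?_, rfl⟩, ?_⟩
    · rw [LinearMap.BilinForm.finrank_orthogonal hB, ← hfinrank_map, hmap, hCr]
    · dsimp only
      rw [← ncard_support_map hφ, hmap]
  · rintro ⟨_, ⟨H, hHr, rfl⟩, rfl⟩
    refine ⟨(B.orthogonal H).map φ, LinearMap.map_le_range, ?_, ?_⟩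
    · rw [hfinrank_map, LinearMap.BilinForm.finrank_orthogonal hB, hHr]
      omega
    · rw [ncard_support_map hφ, LinearMap.BilinForm.orthogonal_orthogonal hB hBr]

end DefiningSet

theorem GHW_range_eq_card_sub_sSup {p : ℕ} [Fact p.Prime] {V : Type*} [AddCommGroup V]
    [Module (ZMod p) V] [FiniteDimensional (ZMod p) V] {B : BilinForm (ZMod p) V}
    (hB : B.Nondegenerate) (hBr : B.IsRefl) {D : Finset V} {φ : V →ₗ[ZMod p] (D → ZMod p)}
    (hφ : ∀ x (d : D), φ x d = B x d) (hinj : Function.Injective φ) {r : ℕ}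
    (hr : r ≤ finrank (ZMod p) V) :
    GHW p (LinearMap.range φ) r =
      D.card - sSup {k | ∃ H : Submodule (ZMod p) V, finrank (ZMod p) H = finrank (ZMod p) V - r ∧
        {x | x ∈ D ∧ x ∈ H}.ncard = k} := by
  rw [GHW, setOf_support_subcode_eq hB hBr hφ hinj hr]
  refine sInf_image_tsub_eq_tsub_sSup ?_ ⟨D.card, ?_⟩ _
  · obtain ⟨H, hH⟩ := exists_submodule_finrank_eq (Nat.sub_le (finrank (ZMod p) V) r)
    exact ⟨_, H, hH, rfl⟩
  · rintro _ ⟨H, -, rfl⟩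
    exact ncard_setOf_mem_and_le_card D H

section TraceForm

variable (F K ι : Type*) [CommRing F] [CommRing K] [Algebra F K] [Fintype ι]

def traceDotForm : BilinForm F (ι → K) :=
  ∑ i, (Algebra.traceForm F K).compl₁₂ (LinearMap.proj i) (LinearMap.proj i)

variable {F K ι}

theorem traceDotForm_apply (x y : ι → K) :
    traceDotForm F K ι x y = ∑ i, Algebra.trace F K (x i * y i) := by
  simp [traceDotForm, Algebra.traceForm_apply]

theorem traceDotForm_isRefl : (traceDotForm F K ι).IsRefl := fun x y h => by
  simpa only [traceDotForm_apply, mul_comm] using h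

end TraceForm

theorem traceDotForm_nondegenerate {F K ι : Type*} [Field F] [Field K] [Algebra F K]
    [FiniteDimensional F K] [Algebra.IsSeparable F K] [Fintype ι] :
    (traceDotForm F K ι).Nondegenerate := by
  classical
  refine .ofSeparatingLeft fun x hx => funext fun i => ?_
  refine (traceForm_nondegenerate F K).1 (x i) fun c => ?_
  have hxc := hx (Pi.single i c)
  rw [traceDotForm_apply, Finset.sum_eq_single i (fun j _ hj => by simp [Pi.single_eq_of_ne hj])
    (by simp)] at hxc
  simpa [Algebra.traceForm_apply] using hxc

theorem codeMap_apply (p e : ℕ) {K : Type*} [Field K] [Fintype K] [Algebra (ZMod p) K]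
    (D : Finset (Fin e → K)) (x : Fin e → K) (d : D) :
    codeMap p e D x d = traceDotForm (ZMod p) K (Fin e) x d := by
  simp only [codeMap, LinearMap.pi_apply, LinearMap.comp_apply, traceDotForm_apply,
    LinearMap.sum_apply, map_sum, LinearMap.mulLeft_apply, LinearMap.proj_apply, mul_comm]

theorem finrank_zmod_eq_of_card_eq_pow {p s : ℕ} (hp : p.Prime) {K : Type*} [AddCommGroup K]
    [Module (ZMod p) K] [Fintype K] (hK : Fintype.card K = p ^ s) :
    finrank (ZMod p) K = s := by
  have := Fact.mk hp
  have hcard := Module.card_eq_pow_finrank (K := ZMod p) (V := K)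
  rw [ZMod.card, hK] at hcard
  exact Nat.pow_right_injective hp.two_le hcard.symm

theorem stmt0_general (p s e : ℕ) (hp : p.Prime)
    {K : Type*} [Field K] [Fintype K] [Algebra (ZMod p) K]
    (hK : Fintype.card K = p ^ s)
    (D : Finset (Fin e → K))
    (hdim : Module.finrank (ZMod p) ↥(LinearMap.range (codeMap p e D)) = e * s)
    (r : ℕ) (hr2 : r ≤ e * s) :
    GHW p (LinearMap.range (codeMap p e D)) r =
      D.card - sSup {k | ∃ H : Submodule (ZMod p) (Fin e → K),
        Module.finrank (ZMod p) ↥H = e * s - r ∧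
        {x : Fin e → K | x ∈ D ∧ x ∈ H}.ncard = k} := by
  have := Fact.mk hp
  have : FiniteDimensional (ZMod p) K := Module.Finite.of_finite
  have hfinrank : finrank (ZMod p) (Fin e → K) = e * s := by
    rw [Module.finrank_pi_fintype, finrank_zmod_eq_of_card_eq_pow hp hK, Finset.sum_const,
      Finset.card_univ, Fintype.card_fin, smul_eq_mul]
  rw [← hfinrank] at hdim hr2 ⊢
  exact GHW_range_eq_card_sub_sSup traceDotForm_nondegenerate traceDotForm_isRefl
    (codeMap_apply p e D) (injective_of_finrank_range_eq hdim) hr2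

theorem stmt0 (p s e : ℕ) (hp : p.Prime) (hs : 1 ≤ s) (he : 1 ≤ e)
    {K : Type*} [Field K] [Fintype K] [Algebra (ZMod p) K]
    (hK : Fintype.card K = p ^ s)
    (D : Finset (Fin e → K)) (hD : ∀ x ∈ D, x ≠ 0)
    (hdim : Module.finrank (ZMod p) ↥(LinearMap.range (codeMap p e D)) = e * s)
    (r : ℕ) (hr1 : 1 ≤ r) (hr2 : r ≤ e * s) :
    GHW p (LinearMap.range (codeMap p e D)) r =
      D.card - sSup {k | ∃ H : Submodule (ZMod p) (Fin e → K),
        Module.finrank (ZMod p) ↥H = e * s - r ∧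
        {x : Fin e → K | x ∈ D ∧ x ∈ H}.ncard = k} :=
  stmt0_general p s e hp hK D hdim r hr2

end Paper0
end
end

section
/- For every a ∈ F_q, S(a) = Σ_{i=0}^{l^{m−1}−1} (−1)^{wt(a^{(i)})} · (l − 2·wt(a^{(i)})). -/
/-! Since 2 is a primitive root modulo `l ^ m`, any two primitive `l ^ r`-th roots of unity in `F`
(`r ≤ m`) are Frobenius conjugates, so `Tr (α ^ k)` depends only on `gcd k (l ^ m)`. The relation
`∑_{j < l} α ^ (k + j l^{m-1}) = 0`, the oddness of `l` and the fact that `Tr` does not vanish on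
the basis then give `Tr (α ^ k) = 1` exactly when `l^{m-1} ∣ k` and `l^m ∤ k`. Expanding `a` in
the basis, for fixed `i < l^{m-1}` the traces `Tr (a α ^ (i + j l^{m-1}))`, `j < l`, are
`W + u (l-1-j)`, where `u` is `a^{(i)}` padded by a zero and `W = ∑ u k`; hence the `i`-th block
of `S(a)` is `(-1)^{wt} (l - 2 wt)`. -/

open scoped BigOperators

noncomputable section

namespace Paper

/-- The additive character value `(-1)^{Tr(x)}` as an integer, where `Tr` is the
trace from `F` to `F_2`. -/
def chi {F : Type*} [Field F] [Fintype F] [Algebra (ZMod 2) F] (x : F) : ℤ :=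
  if Algebra.trace (ZMod 2) F x = 0 then 1 else -1

/-- The exponential sum `S(a,b) = Σ_{x ∈ F_q^*} (-1)^{Tr(a x^{(q-1)/l^m} + b x)}`. -/
def Sab (l m : ℕ) {F : Type*} [Field F] [Fintype F] [Algebra (ZMod 2) F] (a b : F) : ℤ :=
  letI : Fintype Fˣ := Fintype.ofFinite Fˣ
  ∑ x : Fˣ, chi (a * (x : F) ^ ((Fintype.card F - 1) / l ^ m) + b * (x : F))

/-- The exponential sum `S(a) = Σ_{i=0}^{l^m-1} (-1)^{Tr(a α^i)}`. -/
def Sa (l m : ℕ) {F : Type*} [Field F] [Fintype F] [Algebra (ZMod 2) F] (α a : F) : ℤ :=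
  ∑ i ∈ Finset.range (l ^ m), chi (a * α ^ i)

/-- The defining set `D_{(a,b)} = {(x,y) ≠ (0,0) : Tr(a x^{(q-1)/l^m} + b y) = 0}`. -/
def Dset (l m : ℕ) {F : Type*} [Field F] [Fintype F] [Algebra (ZMod 2) F] (a b : F) :
    Set (F × F) :=
  {p | p ≠ 0 ∧
    Algebra.trace (ZMod 2) F (a * p.1 ^ ((Fintype.card F - 1) / l ^ m) + b * p.2) = 0}

/-- The `F_2`-linear map sending `(u,v) ∈ F_q²` to the codeword
`(Tr(u x + v y))_{(x,y) ∈ D_{(a,b)}}`; its range is the code `C_{D_{(a,b)}}`. -/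
def cmap (l m : ℕ) {F : Type*} [Field F] [Fintype F] [Algebra (ZMod 2) F] (a b : F) :
    (F × F) →ₗ[ZMod 2] (↥(Dset l m a b) → ZMod 2) :=
  LinearMap.pi fun d =>
    (Algebra.trace (ZMod 2) F).comp
      ((LinearMap.mulLeft (ZMod 2) (d : F × F).1).comp (LinearMap.fst (ZMod 2) F F) +
       (LinearMap.mulLeft (ZMod 2) (d : F × F).2).comp (LinearMap.snd (ZMod 2) F F))

/-- Hamming weight of a word indexed by `ι`. -/
def hwt {ι : Type*} (c : ι → ZMod 2) : ℕ := {i | c i ≠ 0}.ncard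

/-- Hamming weight of the codeword `c_{(u,v)}` of `C_{D_{(a,b)}}`. -/
def cwt (l m : ℕ) {F : Type*} [Field F] [Fintype F] [Algebra (ZMod 2) F] (a b u v : F) : ℕ :=
  {p : F × F | p ∈ Dset l m a b ∧ Algebra.trace (ZMod 2) F (u * p.1 + v * p.2) ≠ 0}.ncard

/-- The `r`-th generalized Hamming weight of a linear code `C ⊆ F_p^ι`:
the minimum support size of an `r`-dimensional subspace of `C`. -/
def GHW (p : ℕ) {ι : Type*} (C : Submodule (ZMod p) (ι → ZMod p)) (r : ℕ) : ℕ :=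
  sInf {n | ∃ V : Submodule (ZMod p) (ι → ZMod p), V ≤ C ∧
    Module.finrank (ZMod p) ↥V = r ∧ {i : ι | ∃ c ∈ V, c i ≠ 0}.ncard = n}

/-- The Hamming weight `wt(u^{(i)})` of the sub-vector
`u^{(i)} = (a_{l^{m-1}-i}, a_{2 l^{m-1}-i}, …, a_{(l-1) l^{m-1}-i})` of the coordinate
vector of `u` in the basis `{α, α², …, α^{φ(l^m)}}` (the basis `B`, indexed so that
`B j = α^{j+1}`). -/
def wtCoord (l m : ℕ) {F : Type*} [Field F] [Fintype F] [Algebra (ZMod 2) F]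
    (B : Module.Basis (Fin (Nat.totient (l ^ m))) (ZMod 2) F) (i : ℕ) (u : F) : ℕ :=
  {k : ℕ | k < l - 1 ∧ ∃ h : (k + 1) * l ^ (m - 1) - i - 1 < Nat.totient (l ^ m),
      B.repr u ⟨(k + 1) * l ^ (m - 1) - i - 1, h⟩ = 1}.ncard

/-- The exponential sum `B_{H_r} = Σ_{(x,y) ∈ F_q²} Σ_{β ∈ H_r}
(-1)^{Tr(β·(x,y) + a x^{(q-1)/l^m} + b y)}`. -/
def BH (l m : ℕ) {F : Type*} [Field F] [Fintype F] [Algebra (ZMod 2) F] (a b : F)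
    (H : Submodule (ZMod 2) (F × F)) : ℤ :=
  letI : Fintype ↥H := Fintype.ofFinite ↥H
  ∑ p : F × F, ∑ β : ↥H,
    chi ((β : F × F).1 * p.1 + (β : F × F).2 * p.2
      + a * p.1 ^ ((Fintype.card F - 1) / l ^ m) + b * p.2)

open Finset Nat

def sign2 (u : ZMod 2) : ℤ := if u = 0 then 1 else -1

lemma sign2_add (u v : ZMod 2) : sign2 (u + v) = sign2 u * sign2 v := by
  revert u v; decide

lemma sign2_eq_ite (u : ZMod 2) : sign2 u = if u = 1 then -1 else 1 := by
  revert u; decide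

lemma sign2_sum {ι : Type*} (s : Finset ι) (g : ι → ZMod 2) :
    sign2 (∑ k ∈ s, g k) = (-1) ^ #{k ∈ s | g k = 1} := by
  classical
  have hprod : sign2 (∑ k ∈ s, g k) = ∏ k ∈ s, sign2 (g k) := by
    induction s using Finset.cons_induction with
    | empty => rfl
    | cons a s ha ih => rw [sum_cons, prod_cons, sign2_add, ih]
  simp_rw [hprod, sign2_eq_ite, prod_ite, prod_const, one_pow, mul_one]

lemma sum_sign2 {ι : Type*} (s : Finset ι) (g : ι → ZMod 2) :
    ∑ k ∈ s, sign2 (g k) = #s - 2 * #{k ∈ s | g k = 1} := by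
  have hcard := card_filter_add_card_filter_not (s := s) (fun k => g k = 1)
  simp_rw [sign2_eq_ite, sum_ite, sum_const, nsmul_eq_mul]
  rw [← hcard]
  push_cast
  ring

lemma sum_sign2_sum_add {ι : Type*} (s : Finset ι) (g : ι → ZMod 2) :
    ∑ k ∈ s, sign2 (∑ k' ∈ s, g k' + g k) =
      (-1) ^ #{k ∈ s | g k = 1} * (#s - 2 * #{k ∈ s | g k = 1}) := by
  simp_rw [sign2_add, ← mul_sum, sign2_sum, sum_sign2]

lemma sum_range_mul_eq_sum_sum {M : Type*} [AddCommMonoid M] (f : ℕ → M) (a b : ℕ) :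
    ∑ t ∈ range (a * b), f t = ∑ r ∈ range b, ∑ k ∈ range a, f (r + k * b) := by
  rw [sum_comm]
  induction a with
  | zero => simp
  | succ a ih =>
    rw [Nat.succ_mul, sum_range_add, ih, sum_range_succ]
    simp_rw [add_comm (a * b)]

lemma dvd_iff_eq_of_pos_of_lt_two_mul {n x : ℕ} (hx0 : 0 < x) (hx : x < 2 * n) :
    n ∣ x ↔ x = n := by
  refine ⟨fun ⟨c, hc⟩ => ?_, fun h => h ▸ dvd_rfl⟩
  subst hc
  have : c < 2 := Nat.lt_of_mul_lt_mul_left (a := n) (by linarith)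
  have : 0 < c := Nat.pos_of_mul_pos_left hx0
  obtain rfl : c = 1 := by omega
  exact mul_one n

lemma isUnit_of_orderOf_eq_totient {n : ℕ} [NeZero n] {x : ZMod n} (hx : orderOf x = φ n) :
    IsUnit x :=
  (orderOf_pos_iff.1 (hx ▸ totient_pos.2 (NeZero.pos n))).isUnit

lemma exists_pow_modEq_of_orderOf_eq_totient {n g d u : ℕ} [NeZero n]
    (hg : orderOf (g : ZMod n) = φ n) (hd : d ∣ n) (hu : u.Coprime d) :
    ∃ t, u ≡ g ^ t [MOD d] := by
  set G := (isUnit_of_orderOf_eq_totient hg).unit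
  have hG : Subgroup.zpowers G = ⊤ := by
    apply Subgroup.eq_top_of_card_eq
    rw [Nat.card_zpowers, ← orderOf_units, IsUnit.unit_spec, hg, Nat.card_eq_fintype_card,
      ZMod.card_units_eq_totient]
  obtain ⟨U, hU⟩ := ZMod.unitsMap_surjective hd (ZMod.unitOfCoprime u hu)
  obtain ⟨t, rfl⟩ := mem_powers_iff_mem_zpowers.2 (hG ▸ Subgroup.mem_top U)
  refine ⟨t, (ZMod.natCast_eq_natCast_iff _ _ _).1 ?_⟩
  simpa [G, ZMod.unitsMap, ZMod.unitOfCoprime] using (congrArg Units.val hU).symm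

lemma odd_of_orderOf_two_eq_totient {l m : ℕ} (hl : l.Prime) (hm : 1 ≤ m)
    (h2 : orderOf (2 : ZMod (l ^ m)) = φ (l ^ m)) : Odd l := by
  have : NeZero l := ⟨hl.ne_zero⟩
  have h := (ZMod.isUnit_iff_coprime 2 (l ^ m)).1 (by exact_mod_cast isUnit_of_orderOf_eq_totient h2)
  exact (Nat.odd_pow_iff (by omega)).1 (Nat.coprime_two_left.1 h)

lemma isPrimitiveRoot_pow_div {M : Type*} [CommMonoid M] {γ : M} {N n : ℕ}
    (hγ : orderOf γ = N) (hN : N ≠ 0) (hn : n ∣ N) : IsPrimitiveRoot (γ ^ (N / n)) n := by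
  have hn0 : n ≠ 0 := by rintro rfl; exact hN (zero_dvd_iff.1 hn)
  have := (hγ ▸ IsPrimitiveRoot.orderOf γ).pow_of_dvd
    (Nat.div_pos (Nat.le_of_dvd (Nat.pos_of_ne_zero hN) hn) (Nat.pos_of_ne_zero hn0)).ne'
    (Nat.div_dvd_of_dvd hn)
  rwa [Nat.div_div_self hn hN] at this

section Trace

variable {F : Type*} [Field F] [Algebra (ZMod 2) F] {l m : ℕ} {α : F}

lemma trace_pow_two_pow [Fintype F] (x : F) (t : ℕ) :
    Algebra.trace (ZMod 2) F (x ^ 2 ^ t) = Algebra.trace (ZMod 2) F x := by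
  have := Algebra.trace_eq_of_algEquiv (FiniteField.frobeniusAlgEquivOfAlgebraic (ZMod 2) F ^ t) x
  rwa [AlgEquiv.coe_pow, FiniteField.coe_frobeniusAlgEquivOfAlgebraic_iterate, ZMod.card] at this

lemma trace_eq_of_isPrimitiveRoot [Fintype F] {n N : ℕ} [NeZero n]
    (h2 : orderOf (2 : ZMod n) = φ n) (hN : N ∣ n) {β β' : F} (hβ : IsPrimitiveRoot β N)
    (hβ' : IsPrimitiveRoot β' N) : Algebra.trace (ZMod 2) F β' = Algebra.trace (ZMod 2) F β := by
  have : NeZero N := ⟨ne_zero_of_dvd_ne_zero (NeZero.ne n) hN⟩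
  obtain ⟨i, -, rfl⟩ := hβ.eq_pow_of_pow_eq_one hβ'.pow_eq_one
  have hi : i.Coprime N := (hβ.pow_iff_coprime (NeZero.pos N) i).1 hβ'
  obtain ⟨t, ht⟩ := exists_pow_modEq_of_orderOf_eq_totient (g := 2) (by exact_mod_cast h2) hN hi
  rw [← trace_pow_two_pow β t, pow_eq_pow_of_modEq ht hβ.pow_eq_one]

lemma trace_pow_eq_trace_pow_gcd [Fintype F] {n : ℕ} [NeZero n]
    (h2 : orderOf (2 : ZMod n) = φ n) (hα : IsPrimitiveRoot α n) (k : ℕ) :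
    Algebra.trace (ZMod 2) F (α ^ k) = Algebra.trace (ZMod 2) F (α ^ k.gcd n) := by
  have hfin : IsOfFinOrder α := hα.isUnit (NeZero.ne n) |>.isOfFinOrder
  have hord : orderOf (α ^ k) = orderOf (α ^ k.gcd n) := by
    rw [hfin.orderOf_pow, hfin.orderOf_pow, ← hα.eq_orderOf, Nat.gcd_comm n k,
      Nat.gcd_eq_right (Nat.gcd_dvd_right k n)]
  exact trace_eq_of_isPrimitiveRoot h2 ((orderOf_pow_dvd _).trans hα.eq_orderOf.symm.dvd)
    (IsPrimitiveRoot.orderOf _) (hord ▸ IsPrimitiveRoot.orderOf _)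

lemma sum_trace_pow_add_mul_eq_zero (hl : l.Prime) (hm : 1 ≤ m) (hα : IsPrimitiveRoot α (l ^ m))
    (k : ℕ) : ∑ j ∈ range l, Algebra.trace (ZMod 2) F (α ^ (k + j * l ^ (m - 1))) = 0 := by
  have hβ : IsPrimitiveRoot (α ^ l ^ (m - 1)) l :=
    hα.pow (pow_pos hl.pos m) (by rw [← pow_succ, Nat.sub_add_cancel hm])
  simp_rw [← map_sum, pow_add, mul_comm _ (l ^ (m - 1)), pow_mul, ← mul_sum,
    hβ.geom_sum_eq_zero hl.one_lt, mul_zero, map_zero]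

lemma trace_one_eq_zero [Fintype F] (hl : l.Prime) (hm : 1 ≤ m)
    (h2 : orderOf (2 : ZMod (l ^ m)) = φ (l ^ m)) (hα : IsPrimitiveRoot α (l ^ m)) :
    Algebra.trace (ZMod 2) F 1 = 0 := by
  have : NeZero l := ⟨hl.ne_zero⟩
  have hβ : IsPrimitiveRoot (α ^ l ^ (m - 1)) l :=
    hα.pow (pow_pos hl.pos m) (by rw [← pow_succ, Nat.sub_add_cancel hm])
  have hconj : ∀ j ∈ Ico 1 l, Algebra.trace (ZMod 2) F (α ^ (0 + j * l ^ (m - 1))) =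
      Algebra.trace (ZMod 2) F (α ^ l ^ (m - 1)) := by
    intro j hj
    rw [mem_Ico] at hj
    rw [zero_add, mul_comm, pow_mul]
    refine trace_eq_of_isPrimitiveRoot h2 (dvd_pow_self l (by omega)) hβ (hβ.pow_of_coprime _ ?_)
    exact (coprime_of_lt_prime (by omega) hj.2 hl).symm
  have h := sum_trace_pow_add_mul_eq_zero hl hm hα 0
  rw [range_eq_Ico, sum_eq_sum_Ico_succ_bot hl.pos, sum_congr rfl hconj, sum_const, card_Ico,
    nsmul_eq_mul, (ZMod.natCast_eq_zero_iff_even).2 ?_, zero_mul, add_zero] at h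
  · simpa using h
  · exact Nat.Odd.sub_odd (odd_of_orderOf_two_eq_totient hl hm h2) odd_one

lemma trace_pow_prime_pow_eq_zero [Fintype F] (hl : l.Prime)
    (h2 : orderOf (2 : ZMod (l ^ m)) = φ (l ^ m)) (hα : IsPrimitiveRoot α (l ^ m)) {s : ℕ}
    (hs : s + 1 < m) : Algebra.trace (ZMod 2) F (α ^ l ^ s) = 0 := by
  have : NeZero l := ⟨hl.ne_zero⟩
  have hβ : IsPrimitiveRoot (α ^ l ^ s) (l ^ (m - s)) :=
    hα.pow (pow_pos hl.pos m) (by rw [← pow_add, Nat.add_sub_cancel' (by omega)])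
  have hconj : ∀ j ∈ range l, Algebra.trace (ZMod 2) F (α ^ (l ^ s + j * l ^ (m - 1))) =
      Algebra.trace (ZMod 2) F (α ^ l ^ s) := by
    intro j _
    have hexp : l ^ s + j * l ^ (m - 1) = l ^ s * (1 + j * l ^ (m - 2 - s) * l) := by
      rw [mul_assoc, ← pow_succ, mul_add, mul_one, mul_left_comm, ← pow_add]
      congr 3
      omega
    rw [hexp, pow_mul]
    refine trace_eq_of_isPrimitiveRoot h2 (pow_dvd_pow l (by omega)) hβ (hβ.pow_of_coprime _ ?_)
    exact Coprime.pow_right _ ((coprime_add_mul_right_left 1 l _).2 (coprime_one_left l))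
  have h := sum_trace_pow_add_mul_eq_zero hl (by omega) hα (l ^ s)
  rwa [sum_congr rfl hconj, sum_const, card_range, nsmul_eq_mul,
    (ZMod.natCast_eq_one_iff_odd).2 (odd_of_orderOf_two_eq_totient hl (by omega) h2), one_mul] at h

lemma trace_pow_eq_ite_trace [Fintype F] (hl : l.Prime) (hm : 1 ≤ m)
    (h2 : orderOf (2 : ZMod (l ^ m)) = φ (l ^ m)) (hα : IsPrimitiveRoot α (l ^ m)) (k : ℕ) :
    Algebra.trace (ZMod 2) F (α ^ k) =
      if l ^ (m - 1) ∣ k ∧ ¬ l ^ m ∣ k then Algebra.trace (ZMod 2) F (α ^ l ^ (m - 1)) else 0 := by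
  obtain ⟨s, hsm, hs⟩ := (Nat.dvd_prime_pow hl).1 (Nat.gcd_dvd_right k (l ^ m))
  have hdvd : ∀ r ≤ m, l ^ r ∣ k ↔ r ≤ s := fun r hr => by
    rw [← Nat.pow_dvd_pow_iff_le_right hl.one_lt, ← hs, Nat.dvd_gcd_iff,
      and_iff_left (pow_dvd_pow l hr)]
  have : NeZero l := ⟨hl.ne_zero⟩
  simp only [trace_pow_eq_trace_pow_gcd h2 hα k, hs, hdvd _ (Nat.sub_le m 1), hdvd _ le_rfl]
  rcases lt_trichotomy (s + 1) m with h | h | h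
  · rw [if_neg (by omega), trace_pow_prime_pow_eq_zero hl h2 hα h]
  · rw [if_pos (by omega), show s = m - 1 by omega]
  · rw [if_neg (by omega), show s = m by omega, hα.pow_eq_one, trace_one_eq_zero hl hm h2 hα]

lemma trace_pow_eq_ite [Fintype F] (hl : l.Prime) (hm : 1 ≤ m)
    (h2 : orderOf (2 : ZMod (l ^ m)) = φ (l ^ m)) (hα : IsPrimitiveRoot α (l ^ m))
    (hα' : ∃ k, Algebra.trace (ZMod 2) F (α ^ k) ≠ 0) (k : ℕ) :
    Algebra.trace (ZMod 2) F (α ^ k) = if l ^ (m - 1) ∣ k ∧ ¬ l ^ m ∣ k then 1 else 0 := by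
  have hmid : Algebra.trace (ZMod 2) F (α ^ l ^ (m - 1)) = 1 := by
    obtain ⟨k, hk⟩ := hα'
    rw [trace_pow_eq_ite_trace hl hm h2 hα] at hk
    split_ifs at hk
    · revert hk; generalize Algebra.trace (ZMod 2) F (α ^ l ^ (m - 1)) = u; revert u; decide
    · exact absurd rfl hk
  rw [trace_pow_eq_ite_trace hl hm h2 hα, hmid]

lemma exists_trace_pow_ne_zero [Fintype F] {ι : Type*} (B : Module.Basis ι (ZMod 2) F)
    (e : ι → ℕ) (hB : ∀ j, B j = α ^ e j) : ∃ k, Algebra.trace (ZMod 2) F (α ^ k) ≠ 0 := by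
  by_contra! h
  obtain ⟨x, hx⟩ := Algebra.trace_surjective (ZMod 2) F 1
  have : Algebra.trace (ZMod 2) F = 0 := B.ext fun j => by rw [hB, h, LinearMap.zero_apply]
  simp [this] at hx

end Trace

section Coordinates

variable {K V : Type*} [Field K] [AddCommGroup V] [Module K V] {d : ℕ}

/-- With `B t = α ^ (t + 1)`, this is the paper's `a_{t+1}`. -/
def coord (B : Module.Basis (Fin d) K V) (x : V) (t : ℕ) : K :=
  if h : t < d then B.repr x ⟨t, h⟩ else 0

/-- The paper's `x^{(i)}`, as the function `k ↦ a_{(k+1)L - i}`. -/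
def subvector (B : Module.Basis (Fin d) K V) (L i : ℕ) (x : V) (k : ℕ) : K :=
  coord B x ((k + 1) * L - i - 1)

lemma sum_coord_smul (B : Module.Basis (Fin d) K V) (v : ℕ → V) (hB : ∀ j : Fin d, B j = v j)
    {N : ℕ} (hN : d ≤ N) (x : V) : ∑ t ∈ range N, coord B x t • v t = x := by
  rw [← sum_subset (range_subset_range.2 hN) fun t _ ht => by
    rw [coord, dif_neg (by simpa using ht), zero_smul]]
  rw [← Fin.sum_univ_eq_sum_range (fun t => coord B x t • v t)]
  conv_rhs => rw [← B.sum_repr x]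
  refine sum_congr rfl fun j _ => ?_
  rw [coord, dif_pos j.isLt, hB]

end Coordinates

lemma sum_mul_ite_dvd_eq_sum_add (g : ℕ → ZMod 2) {l j : ℕ} (hj : j < l) :
    ∑ k ∈ range l, g k * (if l ∣ k + 1 + j then 0 else 1) =
      ∑ k ∈ range l, g k + g (l - 1 - j) := by
  have hterm : ∀ k ∈ range l, g k * (if l ∣ k + 1 + j then 0 else 1) =
      g k + if l - 1 - j = k then g k else 0 := by
    intro k hk
    rw [mem_range] at hk
    simp only [dvd_iff_eq_of_pos_of_lt_two_mul (show 0 < k + 1 + j by omega)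
      (show k + 1 + j < 2 * l by omega)]
    by_cases h : k + 1 + j = l
    · rw [if_pos h, if_pos (by omega), mul_zero, CharTwo.add_self_eq_zero]
    · rw [if_neg h, if_neg (by omega), mul_one, add_zero]
  rw [sum_congr rfl hterm, sum_add_distrib, sum_ite_eq, if_pos (mem_range.2 (by omega))]

section Expansion

variable {F : Type*} [Field F] [Algebra (ZMod 2) F] {l m : ℕ} {α : F}

lemma trace_mul_pow_add_mul (hl : 0 < l) (hm : 1 ≤ m)
    (htr : ∀ k, Algebra.trace (ZMod 2) F (α ^ k) = if l ^ (m - 1) ∣ k ∧ ¬ l ^ m ∣ k then 1 else 0)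
    (B : Module.Basis (Fin (φ (l ^ m))) (ZMod 2) F)
    (hB : ∀ j : Fin (φ (l ^ m)), B j = α ^ ((j : ℕ) + 1)) (a : F) {i j : ℕ}
    (hi : i < l ^ (m - 1)) (hj : j < l) :
    Algebra.trace (ZMod 2) F (a * α ^ (i + j * l ^ (m - 1))) =
      ∑ k ∈ range l, subvector B (l ^ (m - 1)) i a k + subvector B (l ^ (m - 1)) i a (l - 1 - j) := by
  set L := l ^ (m - 1)
  have hlL : l ^ m = l * L := by rw [← _root_.pow_succ', Nat.sub_add_cancel hm]
  have hL : 0 < L := pow_pos hl _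
  -- only the basis vectors `α ^ (t + 1)` with `t + 1 + i ≡ 0 [MOD L]` contribute
  have hτ : ∀ r < L, ∀ k, Algebra.trace (ZMod 2) F (α ^ (r + k * L + 1 + (i + j * L))) =
      if r = L - 1 - i then (if l ∣ k + 1 + j then 0 else 1) else 0 := by
    intro r hr k
    have hexp : r + k * L + 1 + (i + j * L) = (r + 1 + i) + (k + j) * L := by ring
    simp only [htr, hexp, Nat.dvd_add_left (dvd_mul_left L _),
      dvd_iff_eq_of_pos_of_lt_two_mul (show 0 < r + 1 + i by omega)
        (show r + 1 + i < 2 * L by omega)]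
    by_cases h : r = L - 1 - i
    · rw [if_pos h, show r + 1 + i = L by omega, ← one_add_mul, hlL,
        show 1 + (k + j) = k + 1 + j by ring]
      by_cases hd : l ∣ k + 1 + j <;> simp [hd, Nat.mul_dvd_mul_iff_right hL]
    · rw [if_neg h, if_neg (by omega)]
  calc Algebra.trace (ZMod 2) F (a * α ^ (i + j * L))
      = ∑ t ∈ range (l * L),
          coord B a t * Algebra.trace (ZMod 2) F (α ^ (t + 1 + (i + j * L))) := by
        conv_lhs => rw [← sum_coord_smul B (fun t => α ^ (t + 1)) hB ((totient_le _).trans hlL.le) a]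
        simp_rw [sum_mul, map_sum, smul_mul_assoc, ← pow_add, map_smul, smul_eq_mul]
    _ = ∑ k ∈ range l, subvector B L i a k * (if l ∣ k + 1 + j then 0 else 1) := by
        rw [sum_range_mul_eq_sum_sum, sum_eq_single (L - 1 - i)]
        · refine sum_congr rfl fun k _ => ?_
          rw [hτ _ (by omega), if_pos rfl, subvector]
          congr 2
          rw [Nat.succ_mul]
          omega
        · intro r hr hne
          exact sum_eq_zero fun k _ => by rw [hτ r (mem_range.1 hr), if_neg hne, mul_zero]
        · intro h
          exact absurd (mem_range.2 (by omega)) h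
    _ = _ := sum_mul_ite_dvd_eq_sum_add _ hj

lemma wtCoord_eq_card_filter [Fintype F] (hl : l.Prime) (hm : 1 ≤ m)
    (B : Module.Basis (Fin (φ (l ^ m))) (ZMod 2) F) {i : ℕ} (hi : i < l ^ (m - 1)) (a : F) :
    wtCoord l m B i a = #{k ∈ range l | subvector B (l ^ (m - 1)) i a k = 1} := by
  set L := l ^ (m - 1)
  have hφ : φ (l ^ m) = L * (l - 1) := totient_prime_pow hl (by omega)
  rw [wtCoord, ← Set.ncard_coe_finset, coe_filter]
  congr 1
  ext k
  simp only [Set.mem_ofPred_eq, mem_range, subvector, coord]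
  constructor
  · rintro ⟨hk, h, hr⟩
    exact ⟨by omega, by rw [dif_pos h, hr]⟩
  · rintro ⟨hk, hr⟩
    split_ifs at hr with h
    · refine ⟨?_, h, hr⟩
      by_contra hk'
      have : L * l ≤ L * (k + 1) := Nat.mul_le_mul_left _ (by omega)
      have : L * l = L * (l - 1) + L := by
        rw [← Nat.mul_succ, Nat.succ_eq_add_one, Nat.sub_add_cancel hl.one_le]
      rw [mul_comm L (k + 1)] at *
      omega
    · exact absurd hr zero_ne_one

end Expansion

theorem stmt2 (l m : ℕ) (hl : l.Prime) (hm : 1 ≤ m)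
    {F : Type*} [Field F] [Fintype F] [Algebra (ZMod 2) F]
    (hcard : Fintype.card F = 2 ^ Nat.totient (l ^ m))
    (h2 : orderOf (2 : ZMod (l ^ m)) = Nat.totient (l ^ m))
    (γ : F) (hγ : orderOf γ = Fintype.card F - 1)
    (B : Module.Basis (Fin (Nat.totient (l ^ m))) (ZMod 2) F)
    (hB : ∀ j : Fin (Nat.totient (l ^ m)),
      B j = (γ ^ ((Fintype.card F - 1) / l ^ m)) ^ ((j : ℕ) + 1))
    (a : F) :
    Sa l m (γ ^ ((Fintype.card F - 1) / l ^ m)) a =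
      ∑ i ∈ Finset.range (l ^ (m - 1)),
        (-1 : ℤ) ^ wtCoord l m B i a * ((l : ℤ) - 2 * (wtCoord l m B i a : ℤ)) := by
  set α := γ ^ ((Fintype.card F - 1) / l ^ m)
  have hq : l ^ m ∣ Fintype.card F - 1 := by
    rw [hcard]
    exact (Nat.modEq_iff_dvd' Nat.one_le_two_pow).1 (Nat.ModEq.pow_totient
      (Nat.coprime_two_left.2 ((odd_of_orderOf_two_eq_totient hl hm h2).pow))).symm
  have hα : IsPrimitiveRoot α (l ^ m) :=
    isPrimitiveRoot_pow_div hγ (by have := Fintype.one_lt_card (α := F); omega) hq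
  have htr := trace_pow_eq_ite hl hm h2 hα (exists_trace_pow_ne_zero B _ hB)
  have hlL : l ^ m = l * l ^ (m - 1) := by rw [← _root_.pow_succ', Nat.sub_add_cancel hm]
  rw [Sa, hlL, sum_range_mul_eq_sum_sum]
  refine sum_congr rfl fun i hi => ?_
  set u := subvector B (l ^ (m - 1)) i a
  calc ∑ j ∈ range l, chi (a * α ^ (i + j * l ^ (m - 1)))
      = ∑ j ∈ range l, sign2 (∑ k ∈ range l, u k + u (l - 1 - j)) :=
        sum_congr rfl fun j hj => by
          rw [chi, trace_mul_pow_add_mul hl.pos hm htr B hB a (mem_range.1 hi) (mem_range.1 hj)]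
          rfl
    _ = ∑ k ∈ range l, sign2 (∑ k' ∈ range l, u k' + u k) :=
        sum_range_reflect (fun k => sign2 (∑ k' ∈ range l, u k' + u k)) l
    _ = _ := by
        rw [sum_sign2_sum_add, card_range, wtCoord_eq_card_filter hl hm B (mem_range.1 hi) a]

end Paper
end
end

section
/- The set of values {S(a) : a ∈ F_q^*} is exactly {l^m − 4j : j = 1, 2, …, l^{m−1}(l−1)/2}. -/
/-!
Write `N = l ^ m = l * M` and `α = γ ^ ((q - 1) / N)`, a primitive `N`-th root of unity.
Since `2` has order `φ(N) = [F_q : F_2]` modulo `N`, `F_2(α) = F_q`, so the powers of `α` span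
`F_q`; the trace form being nondegenerate, `a ↦ (Tr(a α^i))_{i < N}` is injective, and
`S(a) = N - 2 · wt`. As `α ^ M` is a primitive `l`-th root of unity,
`∑_{c < l} α^(r + M c) = 0`, so every coset `{r + M c}` carries an even number of ones; as
`φ(N) = N - M`, the image is the whole code of such words. Each coset has odd length `l`, so
the nonzero weights in that code are exactly `2j` with `1 ≤ j ≤ M (l - 1) / 2`.
-/


open scoped BigOperators

noncomputable section

namespace Paper

open Finset Module LinearMap IntermediateField

section SumFst

variable (K ι κ : Type*) [Field K] [Fintype ι]

def sumFst : (ι × κ → K) →ₗ[K] (κ → K) :=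
  LinearMap.pi fun r => ∑ c : ι, LinearMap.proj (c, r)

variable {K ι κ}

theorem sumFst_apply (v : ι × κ → K) (r : κ) : sumFst K ι κ v r = ∑ c, v (c, r) := by
  simp [sumFst]

theorem sumFst_surjective [Nonempty ι] : Function.Surjective (sumFst K ι κ) := by
  classical
  intro w
  refine ⟨fun p => if p.1 = Classical.arbitrary ι then w p.2 else 0, funext fun r => ?_⟩
  simp [sumFst_apply]

theorem finrank_ker_sumFst [Fintype κ] [Nonempty ι] :
    finrank K (ker (sumFst K ι κ)) = Fintype.card κ * (Fintype.card ι - 1) := by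
  have h := (sumFst K ι κ).finrank_range_add_finrank_ker
  rw [range_eq_top.2 sumFst_surjective, finrank_top] at h
  simp only [finrank_fintype_fun_eq_card, Fintype.card_prod] at h
  rw [Nat.mul_sub_one, mul_comm]
  omega

end SumFst

section HammingNorm

variable {ι κ : Type*} [Fintype ι]

theorem natCast_hammingNorm (v : ι → ZMod 2) : (hammingNorm v : ZMod 2) = ∑ i, v i := by
  rw [hammingNorm, Finset.card_filter, Nat.cast_sum]
  refine Finset.sum_congr rfl fun i _ => ?_
  generalize v i = x
  fin_cases x <;> rfl

theorem even_hammingNorm_of_sum_eq_zero {v : ι → ZMod 2} (hv : ∑ i, v i = 0) :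
    Even (hammingNorm v) :=
  ZMod.natCast_eq_zero_iff_even.1 (by rw [natCast_hammingNorm, hv])

variable [Fintype κ]

theorem hammingNorm_prod {β : Type*} [Zero β] [DecidableEq β] (v : ι × κ → β) :
    hammingNorm v = ∑ r, hammingNorm fun c => v (c, r) := by
  simp only [hammingNorm, Finset.card_filter]
  exact Fintype.sum_prod_type_right _

theorem even_hammingNorm_of_mem_ker_sumFst {v : ι × κ → ZMod 2}
    (hv : v ∈ ker (sumFst (ZMod 2) ι κ)) : Even (hammingNorm v) := by
  rw [hammingNorm_prod]
  refine Finset.even_sum _ fun r _ => even_hammingNorm_of_sum_eq_zero ?_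
  rw [← sumFst_apply, mem_ker.1 hv, Pi.zero_apply]

theorem hammingNorm_le_of_mem_ker_sumFst (hι : Odd (Fintype.card ι)) {v : ι × κ → ZMod 2}
    (hv : v ∈ ker (sumFst (ZMod 2) ι κ)) :
    hammingNorm v ≤ Fintype.card κ * (Fintype.card ι - 1) := by
  rw [hammingNorm_prod, ← smul_eq_mul, ← Finset.card_univ, ← Finset.sum_const]
  refine Finset.sum_le_sum fun r _ => ?_
  obtain ⟨a, ha⟩ : Even (hammingNorm fun c => v (c, r)) := by
    refine even_hammingNorm_of_sum_eq_zero ?_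
    rw [← sumFst_apply, mem_ker.1 hv, Pi.zero_apply]
  have hle : (hammingNorm fun c => v (c, r)) ≤ Fintype.card ι := hammingNorm_le_card_fintype
  obtain ⟨b, hb⟩ := hι
  omega

theorem exists_mem_ker_sumFst_hammingNorm_eq {h j : ℕ} (hh : 2 * h ≤ Fintype.card ι)
    (hj : j ≤ Fintype.card κ * h) :
    ∃ v ∈ ker (sumFst (ZMod 2) ι κ), hammingNorm v = 2 * j := by
  classical
  -- Spread `j` pairs over the rows, at most `h` per row, via a `j`-element subset of `κ × Fin h`.
  obtain ⟨T, -, hT⟩ := Finset.exists_subset_card_eq (s := (univ : Finset (κ × Fin h)))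
    (by simpa using hj)
  have hrow (r : κ) : 2 * #{p ∈ T | p.1 = r} ≤ Fintype.card ι := by
    refine le_trans (Nat.mul_le_mul_left 2 ?_) hh
    calc #{p ∈ T | p.1 = r} ≤ #(univ.image fun t : Fin h => (r, t)) := by
          refine Finset.card_le_card fun p hp => ?_
          simp only [Finset.mem_filter] at hp
          simp [← hp.2]
      _ ≤ h := Finset.card_image_le.trans (by simp)
  choose A hA using fun r => Finset.exists_subset_card_eq (s := (univ : Finset ι)) (by
    simpa using hrow r)
  have hslice (r : κ) :
      hammingNorm (fun c => if c ∈ A r then (1 : ZMod 2) else 0) = #(A r) := by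
    simp [hammingNorm]
  refine ⟨fun p => if p.1 ∈ A p.2 then 1 else 0, mem_ker.2 (funext fun r => ?_), ?_⟩
  · rw [sumFst_apply, ← natCast_hammingNorm, hslice, (hA r).2, Nat.cast_mul]
    simp [show (2 : ZMod 2) = 0 from rfl]
  · rw [hammingNorm_prod]
    simp only [hslice, fun r => (hA r).2, ← Finset.mul_sum, ← hT]
    rw [Finset.card_eq_sum_card_fiberwise (f := Prod.fst) (t := univ)
      fun _ _ => mem_coe.2 (mem_univ _)]

theorem exists_mem_ker_sumFst_hammingNorm_eq_iff (hι : Odd (Fintype.card ι)) (w : ℕ) :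
    (∃ v ∈ ker (sumFst (ZMod 2) ι κ), v ≠ 0 ∧ hammingNorm v = w) ↔
      ∃ j, 1 ≤ j ∧ j ≤ Fintype.card κ * (Fintype.card ι - 1) / 2 ∧ w = 2 * j := by
  constructor
  · rintro ⟨v, hv, hv0, rfl⟩
    obtain ⟨j, hj⟩ := even_hammingNorm_of_mem_ker_sumFst hv
    have hpos := hammingNorm_pos_iff.2 hv0
    have hle := hammingNorm_le_of_mem_ker_sumFst hι hv
    exact ⟨j, by omega, (Nat.le_div_iff_mul_le two_pos).2 (by omega), by omega⟩
  · rintro ⟨j, hj1, hj2, rfl⟩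
    have hh : 2 * ((Fintype.card ι - 1) / 2) ≤ Fintype.card ι := by omega
    obtain ⟨v, hv, hw⟩ := exists_mem_ker_sumFst_hammingNorm_eq hh
      (hj2.trans_eq (Nat.mul_div_assoc _ (Nat.Odd.sub_odd hι odd_one).two_dvd))
    exact ⟨v, hv, fun h => by simp [h] at hw; omega, hw⟩

end HammingNorm

section TraceVec

variable {K L : Type*} [Field K] [Field L] [Algebra K L]

variable (K) in
def traceVec {ι : Type*} (β : ι → L) : L →ₗ[K] (ι → K) :=
  LinearMap.pi fun i => (Algebra.traceForm K L).flip (β i)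

theorem traceVec_apply {ι : Type*} (β : ι → L) (a : L) (i : ι) :
    traceVec K β a i = Algebra.trace K L (a * β i) :=
  Algebra.traceForm_apply K a (β i)

theorem traceVec_injective [FiniteDimensional K L] [Algebra.IsSeparable K L] {ι : Type*}
    {β : ι → L} (hβ : Submodule.span K (Set.range β) = ⊤) :
    Function.Injective (traceVec K β) := by
  refine (injective_iff_map_eq_zero _).2 fun a ha =>
    (traceForm_nondegenerate K L).1 a fun x => ?_
  have : Algebra.traceForm K L a = 0 := LinearMap.ext_on hβ <| by
    rintro _ ⟨i, rfl⟩
    exact congrFun ha i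
  rw [this, LinearMap.zero_apply]

end TraceVec

section PrimitiveRoot

theorem isPrimitiveRoot_pow_div_of_dvd {M : Type*} [CommMonoid M] {γ : M} {k N : ℕ}
    (hγ : IsPrimitiveRoot γ k) (hk : k ≠ 0) (hN : N ∣ k) :
    IsPrimitiveRoot (γ ^ (k / N)) N := by
  have hNk : k / N ≠ 0 := (Nat.div_pos (Nat.le_of_dvd (Nat.pos_of_ne_zero hk) hN)
    (Nat.pos_of_dvd_of_pos hN (Nat.pos_of_ne_zero hk))).ne'
  simpa [Nat.div_div_self hN hk] using hγ.pow_of_dvd hNk (Nat.div_dvd_of_dvd hN)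

variable {K L : Type*} [Field K] [Fintype K] [Field L] [Finite L] [Algebra K L]

/- `K⟮α⟯` is a field with `|K| ^ d` elements containing a primitive `N`-th root of unity,
so `|K| ^ d ≡ 1 [MOD N]` and the order of `|K|` modulo `N` divides `d`. -/
theorem adjoin_eq_top_of_isPrimitiveRoot {α : L} {N : ℕ} (hα : IsPrimitiveRoot α N)
    (hN : N ≠ 0) (hK : orderOf (Fintype.card K : ZMod N) = finrank K L) : K⟮α⟯ = ⊤ := by
  let : Fintype K⟮α⟯ := Fintype.ofFinite _
  set d := finrank K K⟮α⟯
  have hcard : Fintype.card K⟮α⟯ = Fintype.card K ^ d := Module.card_eq_pow_finrank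
  have hpow : AdjoinSimple.gen K α ^ (Fintype.card K⟮α⟯ - 1) = 1 :=
    FiniteField.pow_card_sub_one_eq_one _ fun h =>
      hα.ne_zero hN (by simpa using congrArg Subtype.val h)
  have hdvd : N ∣ Fintype.card K ^ d - 1 :=
    hcard ▸ hα.dvd_of_pow_eq_one _ (by simpa using congrArg Subtype.val hpow)
  have hKd : (Fintype.card K : ZMod N) ^ d = 1 := by
    have := (ZMod.natCast_eq_natCast_iff _ _ _).2
      ((Nat.modEq_iff_dvd' (Nat.one_le_pow _ _ Fintype.card_pos)).2 hdvd)
    exact_mod_cast this.symm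
  have hfd : finrank K L ≤ d := Nat.le_of_dvd finrank_pos (hK ▸ orderOf_dvd_of_pow_eq_one hKd)
  exact IntermediateField.eq_of_le_of_finrank_le le_top (by simpa using hfd)

theorem span_powers_eq_top_of_isPrimitiveRoot {α : L} {N : ℕ} (hα : IsPrimitiveRoot α N)
    (hN : N ≠ 0) (hK : orderOf (Fintype.card K : ZMod N) = finrank K L) :
    Submodule.span K (Submonoid.powers α : Set L) = ⊤ := by
  have hadj := Algebra.adjoin_eq_top_of_primitive_element (Algebra.IsAlgebraic.isAlgebraic α)
    (adjoin_eq_top_of_isPrimitiveRoot hα hN hK)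
  rw [Submonoid.powers_eq_closure, ← Algebra.adjoin_eq_span, hadj, Algebra.top_toSubmodule]

end PrimitiveRoot

section PowGrid

/- When `α` is a primitive `l * M`-th root of unity, the column `r` of this grid is `α ^ r`
times the `l`-th roots of unity. -/
def powGrid {L : Type*} [Monoid L] (α : L) (l M : ℕ) (p : Fin l × Fin M) : L :=
  α ^ ((p.2 : ℕ) + M * p.1)

variable {K L : Type*} [Field K] [Field L] [Algebra K L] {α : L} {l M : ℕ}

theorem range_powGrid (hα : IsPrimitiveRoot α (l * M)) (hlM : l * M ≠ 0) :
    Set.range (powGrid α l M) = Submonoid.powers α := by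
  refine Set.Subset.antisymm (Set.range_subset_iff.2 fun p => ⟨_, rfl⟩) ?_
  rintro _ ⟨k, rfl⟩
  refine ⟨finProdFinEquiv.symm ⟨k % (l * M), Nat.mod_lt _ (Nat.pos_of_ne_zero hlM)⟩, ?_⟩
  rw [powGrid, ← finProdFinEquiv_apply_val, Equiv.apply_symm_apply, Fin.val_mk]
  conv_lhs => rw [hα.eq_orderOf, pow_mod_orderOf]

theorem traceVec_powGrid_mem_ker_sumFst (hl : 1 < l) (hM : M ≠ 0)
    (hα : IsPrimitiveRoot α (l * M)) (a : L) :
    traceVec K (powGrid α l M) a ∈ ker (sumFst K (Fin l) (Fin M)) := by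
  have hζ : IsPrimitiveRoot (α ^ M) l := by
    simpa [hM] using hα.pow_of_dvd hM (dvd_mul_left M l)
  refine mem_ker.2 (funext fun r => ?_)
  have hterm (c : Fin l) :
      a * powGrid α l M (c, r) = a * α ^ (r : ℕ) * (α ^ M) ^ (c : ℕ) := by
    rw [powGrid, pow_add, pow_mul, mul_assoc]
  simp only [sumFst_apply, traceVec_apply, hterm, ← map_sum, ← Finset.mul_sum,
    Fin.sum_univ_eq_sum_range (fun c => (α ^ M) ^ c), hζ.geom_sum_eq_zero hl, mul_zero,
    map_zero, Pi.zero_apply]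

variable [Fintype K] [Fintype L]

theorem traceVec_powGrid_injective (hlM : l * M ≠ 0) (hα : IsPrimitiveRoot α (l * M))
    (hK : orderOf (Fintype.card K : ZMod (l * M)) = finrank K L) :
    Function.Injective (traceVec K (powGrid α l M)) := by
  refine traceVec_injective ?_
  rw [range_powGrid hα hlM]
  exact span_powers_eq_top_of_isPrimitiveRoot hα hlM hK

theorem range_traceVec_powGrid (hl : 1 < l) (hM : M ≠ 0) (hα : IsPrimitiveRoot α (l * M))
    (hK : orderOf (Fintype.card K : ZMod (l * M)) = finrank K L)
    (hdim : finrank K L = M * (l - 1)) :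
    range (traceVec K (powGrid α l M)) = ker (sumFst K (Fin l) (Fin M)) := by
  have hinj := traceVec_powGrid_injective (mul_ne_zero (by omega) hM) hα hK
  refine Submodule.eq_of_le_of_finrank_eq ?_ ?_
  · rintro _ ⟨a, rfl⟩
    exact traceVec_powGrid_mem_ker_sumFst hl hM hα a
  · have : Nonempty (Fin l) := ⟨⟨0, by omega⟩⟩
    rw [finrank_range_of_inj hinj, finrank_ker_sumFst, hdim, Fintype.card_fin, Fintype.card_fin]

end PowGrid

theorem exists_hammingNorm_traceVec_powGrid_eq_iff {L : Type*} [Field L] [Fintype L]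
    [Algebra (ZMod 2) L] {α : L} {l M : ℕ} (hl : Odd l) (hl1 : 1 < l) (hM : M ≠ 0)
    (hα : IsPrimitiveRoot α (l * M)) (hK : orderOf (2 : ZMod (l * M)) = finrank (ZMod 2) L)
    (hdim : finrank (ZMod 2) L = M * (l - 1)) (w : ℕ) :
    (∃ a ≠ 0, hammingNorm (traceVec (ZMod 2) (powGrid α l M) a) = w) ↔
      ∃ j, 1 ≤ j ∧ j ≤ M * (l - 1) / 2 ∧ w = 2 * j := by
  have hK' : orderOf (Fintype.card (ZMod 2) : ZMod (l * M)) = finrank (ZMod 2) L := by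
    rw [ZMod.card]; exact_mod_cast hK
  have hinj := traceVec_powGrid_injective (mul_ne_zero (by omega) hM) hα hK'
  have hweights := exists_mem_ker_sumFst_hammingNorm_eq_iff (ι := Fin l) (κ := Fin M)
    (by simpa using hl) w
  rw [← range_traceVec_powGrid hl1 hM hα hK' hdim, Fintype.card_fin, Fintype.card_fin]
    at hweights
  rw [← hweights]
  constructor
  · rintro ⟨a, ha, rfl⟩
    exact ⟨_, mem_range_self _ a, (map_ne_zero_iff _ hinj).2 ha, rfl⟩
  · rintro ⟨_, ⟨a, rfl⟩, hv0, hw⟩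
    exact ⟨a, (map_ne_zero_iff _ hinj).1 hv0, hw⟩

theorem sum_chi_eq_card_sub_hammingNorm {F ι : Type*} [Field F] [Fintype F]
    [Algebra (ZMod 2) F] [Fintype ι] (f : ι → F) :
    ∑ i, chi (f i) =
      Fintype.card ι - 2 * hammingNorm fun i => Algebra.trace (ZMod 2) F (f i) := by
  have hchi (x : F) : chi x = 1 - 2 * if Algebra.trace (ZMod 2) F x ≠ 0 then 1 else 0 := by
    by_cases hx : Algebra.trace (ZMod 2) F x = 0 <;> simp [chi, hx]
  simp only [hchi, Finset.sum_sub_distrib, ← Finset.mul_sum, Finset.sum_boole, hammingNorm]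
  simp

theorem Sa_eq_sub_hammingNorm {F : Type*} [Field F] [Fintype F] [Algebra (ZMod 2) F]
    {l m M : ℕ} (hlM : l ^ m = l * M) (α a : F) :
    Sa l m α a = l * M - 2 * hammingNorm (traceVec (ZMod 2) (powGrid α l M) a) := by
  rw [Sa, hlM, Finset.sum_range, ← finProdFinEquiv.sum_comp, sum_chi_eq_card_sub_hammingNorm,
    Fintype.card_prod, Fintype.card_fin, Fintype.card_fin]
  rfl

theorem stmt3 (l m : ℕ) (hl : l.Prime) (hm : 1 ≤ m)
    {F : Type*} [Field F] [Fintype F] [Algebra (ZMod 2) F]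
    (hcard : Fintype.card F = 2 ^ Nat.totient (l ^ m))
    (h2 : orderOf (2 : ZMod (l ^ m)) = Nat.totient (l ^ m))
    (γ : F) (hγ : orderOf γ = Fintype.card F - 1) :
    {s : ℤ | ∃ a : F, a ≠ 0 ∧ Sa l m (γ ^ ((Fintype.card F - 1) / l ^ m)) a = s} =
      {s : ℤ | ∃ j : ℕ, 1 ≤ j ∧ j ≤ l ^ (m - 1) * (l - 1) / 2 ∧ s = (l : ℤ) ^ m - 4 * j} := by
  have hcop : Nat.Coprime 2 (l ^ m) := (ZMod.isUnit_iff_coprime 2 _).1 <| by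
    exact_mod_cast (orderOf_pos_iff.1 (h2 ▸ Nat.totient_pos.2 (pow_pos hl.pos m))).isUnit
  have hodd : Odd l := Nat.coprime_two_left.1 ((Nat.coprime_pow_right_iff hm _ _).1 hcop)
  have hfinrank : finrank (ZMod 2) F = Nat.totient (l ^ m) := Nat.pow_right_injective le_rfl <| by
    simpa [hcard] using (Module.card_eq_pow_finrank (K := ZMod 2) (V := F)).symm
  set M := l ^ (m - 1)
  have hM : M ≠ 0 := (pow_pos hl.pos _).ne'
  have hlM : l ^ m = l * M := by rw [← pow_succ']; congr 1; omega
  set α := γ ^ ((Fintype.card F - 1) / l ^ m)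
  have hα : IsPrimitiveRoot α (l * M) := hlM ▸ isPrimitiveRoot_pow_div_of_dvd
    (hγ ▸ IsPrimitiveRoot.orderOf γ) (by have := Fintype.one_lt_card (α := F); omega)
    (hcard ▸ (Nat.modEq_iff_dvd' Nat.one_le_two_pow).1 (Nat.ModEq.pow_totient hcop).symm)
  have hweights := exists_hammingNorm_traceVec_powGrid_eq_iff hodd hl.one_lt hM hα
    (by rw [← hlM, hfinrank, h2]) (by rw [hfinrank, Nat.totient_prime_pow hl hm])
  have hlMℤ : (l : ℤ) ^ m = l * M := by exact_mod_cast hlM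
  ext s
  simp only [Set.mem_ofPred_eq, Sa_eq_sub_hammingNorm hlM]
  constructor
  · rintro ⟨a, ha, rfl⟩
    obtain ⟨j, hj1, hj2, hw⟩ := (hweights _).1 ⟨a, ha, rfl⟩
    exact ⟨j, hj1, hj2, by rw [hw, hlMℤ]; push_cast; ring⟩
  · rintro ⟨j, hj1, hj2, rfl⟩
    obtain ⟨a, ha, hw⟩ := (hweights _).2 ⟨j, hj1, hj2, rfl⟩
    exact ⟨a, ha, by rw [hw, hlMℤ]; push_cast; ring⟩

end Paper
end
end

section
/- Let a ∈ F_q^* and b ∈ F_q. Then n = |D_{(a,b)}| = (1/2)·q·(q + 1 + S(a,0)) − 1 if b = 0, and n = |D_{(a,b)}| = (1/2)·q² − 1 if b ≠ 0. -/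
open scoped BigOperators

noncomputable section

namespace Paper

/-!
For `z ∈ F_q`, `1 + (-1)^{Tr z}` is `2` if `Tr z = 0` and `0` otherwise. Summing over all
`(x, y) ∈ F_q²` and using that `(-1)^{Tr}` is an additive character,
`2 (|D_{(a,b)}| + 1) = q² + (Σ_x (-1)^{Tr(a x^e)}) (Σ_y (-1)^{Tr(b y)})` with `e = (q-1)/l^m`.
The sum over `y` is `q` for `b = 0` and vanishes for `b ≠ 0`. Since `2` has order `φ(l^m)`
modulo `l^m`, `l^m` divides `q - 1`, so `e > 0`; hence `0^e = 0` and the sum over `x` is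
`1 + S(a,0)`.
-/

theorem sum_eq_add_sum_units {G₀ M : Type*} [GroupWithZero G₀] [Fintype G₀] [Fintype G₀ˣ]
    [AddCommMonoid M] (f : G₀ → M) : ∑ x, f x = f 0 + ∑ x : G₀ˣ, f x := by
  classical
  rw [Fintype.sum_eq_add_sum_subtype_ne f 0]
  exact congrArg _ (Fintype.sum_equiv unitsEquivNeZero _ _ fun _ => rfl).symm

theorem dvd_pow_orderOf_sub_one {n a : ℕ} (ha : 1 ≤ a) :
    n ∣ a ^ orderOf (a : ZMod n) - 1 :=
  (Nat.modEq_iff_dvd' (Nat.one_le_pow _ _ ha)).mp <|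
    (ZMod.natCast_eq_natCast_iff _ _ _).mp <| by push_cast; exact (pow_orderOf_eq_one _).symm

open Finset

section TraceCharacter

variable {F : Type*} [Field F] [Fintype F] [Algebra (ZMod 2) F]

theorem chi_zero : chi (0 : F) = 1 := by simp [chi]

theorem chi_add (x y : F) : chi (x + y) = chi x * chi y := by
  unfold chi
  rw [map_add]
  generalize Algebra.trace (ZMod 2) F x = s
  generalize Algebra.trace (ZMod 2) F y = t
  revert s t
  decide

theorem sum_chi_eq_zero : ∑ y : F, chi y = 0 := by
  obtain ⟨y₀, hy₀⟩ := Algebra.trace_surjective (ZMod 2) F 1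
  have hshift : ∑ y : F, chi (y + y₀) = ∑ y : F, chi y :=
    Fintype.sum_equiv (Equiv.addRight y₀) _ _ fun _ => rfl
  have hchi : chi y₀ = -1 := by simp [chi, hy₀]
  simp only [chi_add, hchi, mul_neg_one, sum_neg_distrib] at hshift
  linarith

theorem sum_chi_mul_left {b : F} (hb : b ≠ 0) : ∑ y : F, chi (b * y) = 0 :=
  (Fintype.sum_equiv (Equiv.mulLeft₀ b hb) _ chi fun _ => rfl).trans sum_chi_eq_zero

theorem two_mul_card_trace_eq_zero {α : Type*} [Fintype α] (h : α → F) :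
    2 * (#{x | Algebra.trace (ZMod 2) F (h x) = 0} : ℤ) = Fintype.card α + ∑ x, chi (h x) := by
  have hterm (x : α) : 1 + chi (h x) = if Algebra.trace (ZMod 2) F (h x) = 0 then 2 else 0 := by
    unfold chi; split_ifs <;> norm_num
  calc 2 * (#{x | Algebra.trace (ZMod 2) F (h x) = 0} : ℤ)
      = ∑ x, if Algebra.trace (ZMod 2) F (h x) = 0 then 2 else 0 := by
        rw [sum_ite, sum_const_zero, add_zero, sum_const, nsmul_eq_mul, mul_comm]
    _ = ∑ x, (1 + chi (h x)) := (sum_congr rfl fun x _ => hterm x).symm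
    _ = Fintype.card α + ∑ x, chi (h x) := by simp [sum_add_distrib]

theorem sum_chi_add_prod {α β : Type*} [Fintype α] [Fintype β] (f : α → F) (g : β → F) :
    ∑ p : α × β, chi (f p.1 + g p.2) = (∑ x, chi (f x)) * ∑ y, chi (g y) := by
  simp_rw [chi_add, Fintype.sum_prod_type, sum_mul_sum]

theorem ncard_Dset_add_one (l m : ℕ) (a b : F) (he : (Fintype.card F - 1) / l ^ m ≠ 0) :
    (Dset l m a b).ncard + 1 = #{p : F × F |
      Algebra.trace (ZMod 2) F (a * p.1 ^ ((Fintype.card F - 1) / l ^ m) + b * p.2) = 0} := by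
  classical
  rw [← card_erase_add_one (a := 0) (by simp [zero_pow he]), ← Set.ncard_coe_finset]
  congr 2
  ext p
  simp [Dset, and_comm]

theorem two_mul_ncard_Dset_add_one (l m : ℕ) (a b : F) (he : (Fintype.card F - 1) / l ^ m ≠ 0) :
    2 * ((Dset l m a b).ncard + 1 : ℤ) = Fintype.card F ^ 2 +
      (∑ x : F, chi (a * x ^ ((Fintype.card F - 1) / l ^ m))) * ∑ y : F, chi (b * y) := by
  have hcard : (Fintype.card F : ℤ) ^ 2 = Fintype.card (F × F) := by simp [sq]
  rw [← sum_chi_add_prod, hcard, ← two_mul_card_trace_eq_zero]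
  exact_mod_cast congrArg (2 * ·) (ncard_Dset_add_one l m a b he)

theorem sum_chi_mul_pow_div_eq_one_add_Sab (l m : ℕ) (a : F)
    (he : (Fintype.card F - 1) / l ^ m ≠ 0) :
    ∑ x : F, chi (a * x ^ ((Fintype.card F - 1) / l ^ m)) = 1 + Sab l m a 0 := by
  classical
  calc ∑ x : F, chi (a * x ^ ((Fintype.card F - 1) / l ^ m))
      = chi (a * 0 ^ ((Fintype.card F - 1) / l ^ m)) + Sab l m a 0 := by
        simp only [Sab, zero_mul, add_zero]
        convert sum_eq_add_sum_units _
    _ = 1 + Sab l m a 0 := by rw [zero_pow he, mul_zero, chi_zero]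

end TraceCharacter

theorem stmt4_general (l m : ℕ)
    {F : Type*} [Field F] [Fintype F] [Algebra (ZMod 2) F]
    (hcard : Fintype.card F = 2 ^ Nat.totient (l ^ m))
    (h2 : orderOf (2 : ZMod (l ^ m)) = Nat.totient (l ^ m))
    (a : F) (b : F) :
    (b = 0 →
      ((Dset l m a b).ncard : ℚ) = 1 / 2 * (Fintype.card F : ℚ) * ((Fintype.card F : ℚ) + 1 + (Sab l m a 0 : ℚ)) - 1) ∧
    (b ≠ 0 →
      ((Dset l m a b).ncard : ℚ) = 1 / 2 * (Fintype.card F : ℚ) ^ 2 - 1) := by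
  have hdvd : l ^ m ∣ Fintype.card F - 1 := by
    simpa [hcard, h2] using dvd_pow_orderOf_sub_one (n := l ^ m) one_le_two
  have hq : 0 < Fintype.card F - 1 := Nat.sub_pos_of_lt Fintype.one_lt_card
  have he : (Fintype.card F - 1) / l ^ m ≠ 0 :=
    (Nat.div_pos (Nat.le_of_dvd hq hdvd) (Nat.pos_of_dvd_of_pos hdvd hq)).ne'
  have hcount := two_mul_ncard_Dset_add_one l m a b he
  refine ⟨fun hb => ?_, fun hb => ?_⟩
  · subst hb
    simp only [sum_chi_mul_pow_div_eq_one_add_Sab l m a he, zero_mul, chi_zero, sum_const,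
      card_univ, nsmul_eq_mul, mul_one] at hcount
    have hcountQ : 2 * ((Dset l m a 0).ncard + 1 : ℚ) =
        Fintype.card F ^ 2 + (1 + Sab l m a 0) * Fintype.card F := by
      exact_mod_cast hcount
    linarith
  · rw [sum_chi_mul_left hb, mul_zero, add_zero] at hcount
    have hcountQ : 2 * ((Dset l m a b).ncard + 1 : ℚ) = Fintype.card F ^ 2 := by exact_mod_cast hcount
    linarith

theorem stmt4 (l m : ℕ) (hl : l.Prime) (hm : 1 ≤ m)
    {F : Type*} [Field F] [Fintype F] [Algebra (ZMod 2) F]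
    (hcard : Fintype.card F = 2 ^ Nat.totient (l ^ m))
    (h2 : orderOf (2 : ZMod (l ^ m)) = Nat.totient (l ^ m))
    (a : F) (ha : a ≠ 0) (b : F) :
    (b = 0 →
      ((Dset l m a b).ncard : ℚ) = 1 / 2 * (Fintype.card F : ℚ) * ((Fintype.card F : ℚ) + 1 + (Sab l m a 0 : ℚ)) - 1) ∧
    (b ≠ 0 →
      ((Dset l m a b).ncard : ℚ) = 1 / 2 * (Fintype.card F : ℚ) ^ 2 - 1) :=
  stmt4_general l m hcard h2 a b

end Paper
end
end

section
/- For every a ∈ F_q^*, neither E_a = {u ∈ F_q^* : wt((a·u^{−(q−1)/l^m})^{(0)}) is even} nor O_a = {u ∈ F_q^* : wt((a·u^{−(q−1)/l^m})^{(0)}) is odd} is empty. -/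
open scoped BigOperators

noncomputable section

/-! The parity of `wt(u^{(0)})` is an `F_2`-linear functional `ψ` of `u`, namely a sum of
coordinates, so `ψ ≠ 0`. As `u` runs over `F_q^*`, `u^{-(q-1)/l^m}` runs over the powers of
`α`, an element `≠ 1` of odd order dividing `l^m`. Since `Σ_{i < l^m} α^i = 0` and `l^m` is odd,
the values `ψ (a α^i)` are not all `1`; since the powers of `α` span `F_q` and `ψ ≠ 0`, they are
not all `0`. -/

open Finset

theorem ZMod.natCast_card_filter_eq_one_eq_sum {ι : Type*} (s : Finset ι) (f : ι → ZMod 2) :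
    ((s.filter (f · = 1)).card : ZMod 2) = ∑ i ∈ s, f i := by
  rw [Finset.card_filter, Nat.cast_sum]
  refine Finset.sum_congr rfl fun i _ => ?_
  generalize f i = x
  fin_cases x <;> rfl

theorem Nat.one_lt_totient_of_odd {n : ℕ} (hn : Odd n) (h1 : 1 < n) : 1 < n.totient := by
  have h3 : 2 < n := by have := Nat.odd_iff.1 hn; omega
  have := Nat.even_iff.1 (Nat.totient_even h3)
  have := Nat.totient_pos.2 (by omega : 0 < n)
  omega

theorem dvd_pow_sub_one_of_natCast_pow_eq_one {n b k : ℕ} (hb : 1 ≤ b)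
    (h : (b : ZMod n) ^ k = 1) : n ∣ b ^ k - 1 := by
  rw [← ZMod.natCast_eq_zero_iff, Nat.cast_sub (Nat.one_le_pow _ _ hb)]
  push_cast
  rw [h, sub_self]

theorem Nat.odd_of_dvd_two_pow_sub_one {n k : ℕ} (hk : k ≠ 0) (h : n ∣ 2 ^ k - 1) : Odd n :=
  (Nat.Even.sub_odd Nat.one_le_two_pow ((Nat.even_pow' hk).2 even_two) odd_one).of_dvd_nat h

theorem Module.Basis.sum_coord_comp_ne_zero {ι κ R M : Type*} [Semiring R] [Nontrivial R]
    [AddCommMonoid M] [Module R M] (B : Module.Basis ι R M) [Fintype κ] [Nonempty κ]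
    {e : κ → ι} (he : Function.Injective e) : ∑ k, B.coord (e k) ≠ 0 := by
  classical
  obtain ⟨k₀⟩ := ‹Nonempty κ›
  intro h
  have := LinearMap.congr_fun h (B (e k₀))
  simp only [LinearMap.sum_apply, Module.Basis.coord_apply, Module.Basis.repr_self,
    Finsupp.single_apply, he.eq_iff, Finset.sum_ite_eq, Finset.mem_univ, if_true,
    LinearMap.zero_apply] at this
  exact one_ne_zero this

section PowerBasis

variable {R A : Type*} {n : ℕ} [Semiring R] [Semiring A] [Module R A]
  (B : Module.Basis (Fin n) R A) {α : A}

theorem Module.Basis.ne_one_of_apply_eq_pow [Nontrivial R] (hB : ∀ j, B j = α ^ ((j : ℕ) + 1))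
    (hn : 1 < n) : α ≠ 1 := by
  intro h
  have := B.injective (show B ⟨0, by omega⟩ = B ⟨1, hn⟩ by simp [hB, h])
  simp at this

theorem Module.Basis.span_range_pow_eq_top (hB : ∀ j, B j = α ^ ((j : ℕ) + 1)) :
    Submodule.span R (Set.range (α ^ · : ℕ → A)) = ⊤ :=
  eq_top_iff.2 <| B.span_eq ▸
    Submodule.span_mono (Set.range_subset_iff.2 fun j => ⟨j + 1, (hB j).symm⟩)

end PowerBasis

theorem exists_apply_mul_pow_eq_zero {F : Type*} [DivisionRing F] [Algebra (ZMod 2) F]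
    (ψ : F →ₗ[ZMod 2] ZMod 2) {α : F} {n : ℕ} (hα : α ^ n = 1) (hα1 : α ≠ 1) (hn : Odd n)
    (a : F) : ∃ i, ψ (a * α ^ i) = 0 := by
  by_contra! h
  have hone (i : ℕ) : ψ (a * α ^ i) = 1 := (by decide : ∀ x : ZMod 2, x ≠ 0 → x = 1) _ (h i)
  have hgeom : ∑ i ∈ range n, α ^ i = 0 := by simp [geom_sum_eq hα1, hα]
  have := congrArg ψ (congrArg (a * ·) hgeom)
  simp only [Finset.mul_sum, map_sum, hone, mul_zero, map_zero, Finset.sum_const, card_range,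
    nsmul_eq_mul, mul_one, ZMod.natCast_eq_one_iff_odd.2 hn] at this
  exact one_ne_zero this

theorem exists_apply_mul_pow_ne_zero {K F M : Type*} [CommSemiring K] [Field F] [Algebra K F]
    [AddCommMonoid M] [Module K M] {ψ : F →ₗ[K] M} (hψ : ψ ≠ 0) {α : F}
    (hspan : Submodule.span K (Set.range (α ^ · : ℕ → F)) = ⊤) {a : F} (ha : a ≠ 0) :
    ∃ i, ψ (a * α ^ i) ≠ 0 := by
  by_contra! h
  have hmul : ψ ∘ₗ LinearMap.mulLeft K a = 0 := LinearMap.ext_on_range hspan h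
  refine hψ (LinearMap.ext fun x => ?_)
  simpa [ha] using LinearMap.congr_fun hmul (a⁻¹ * x)

namespace Paper

theorem sub_one_lt_totient_prime_pow {l m k : ℕ} (hl : l.Prime) (hm : 1 ≤ m) (hk : k < l - 1) :
    (k + 1) * l ^ (m - 1) - 1 < Nat.totient (l ^ m) := by
  have h1 : (k + 1) * l ^ (m - 1) ≤ (l - 1) * l ^ (m - 1) := Nat.mul_le_mul_right _ (by omega)
  have h2 : l ^ (m - 1) ≤ (k + 1) * l ^ (m - 1) := Nat.le_mul_of_pos_left _ k.succ_pos
  have hL : 0 < l ^ (m - 1) := pow_pos hl.pos _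
  rw [Nat.totient_prime_pow hl hm, mul_comm (l ^ (m - 1))]
  omega

/-- The index of the coordinate `a_{(k+1) l^{m-1}}` in a basis indexed by `j ↦ α^{j+1}`. -/
def digitIndex {l m : ℕ} (hl : l.Prime) (hm : 1 ≤ m) :
    Fin (l - 1) ↪ Fin (Nat.totient (l ^ m)) where
  toFun k := ⟨(k + 1) * l ^ (m - 1) - 1, sub_one_lt_totient_prime_pow hl hm k.2⟩
  inj' k k' h := by
    have hL : 0 < l ^ (m - 1) := pow_pos hl.pos _
    have := Nat.sub_one_cancel (Nat.mul_pos k.succ_pos hL) (Nat.mul_pos k'.succ_pos hL)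
      (congrArg Fin.val h)
    exact Fin.ext (by simpa using Nat.eq_of_mul_eq_mul_right hL this)

section Weight

variable {l m : ℕ} (hl : l.Prime) (hm : 1 ≤ m) {F : Type*} [Field F] [Fintype F]
  [Algebra (ZMod 2) F] (B : Module.Basis (Fin (Nat.totient (l ^ m))) (ZMod 2) F)

theorem wtCoord_zero_eq_card (u : F) :
    wtCoord l m B 0 u = (univ.filter fun k => B.repr u (digitIndex hl hm k) = 1).card := by
  have : {k : ℕ | k < l - 1 ∧ ∃ h : (k + 1) * l ^ (m - 1) - 0 - 1 < Nat.totient (l ^ m),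
      B.repr u ⟨(k + 1) * l ^ (m - 1) - 0 - 1, h⟩ = 1} =
      Fin.val '' ((univ.filter fun k => B.repr u (digitIndex hl hm k) = 1 : Finset _) :
        Set (Fin (l - 1))) := by
    ext k
    simp only [Set.mem_ofPred_eq, Nat.sub_zero, Finset.coe_filter, Finset.mem_univ, true_and,
      Set.mem_image]
    constructor
    · rintro ⟨hk, _, hrepr⟩
      exact ⟨⟨k, hk⟩, hrepr, rfl⟩
    · rintro ⟨k, hrepr, rfl⟩
      exact ⟨k.2, (digitIndex hl hm k).2, hrepr⟩
  rw [wtCoord, this, Set.ncard_image_of_injective _ Fin.val_injective, Set.ncard_coe_finset]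

theorem natCast_wtCoord_zero (u : F) :
    (wtCoord l m B 0 u : ZMod 2) = (∑ k, B.coord (digitIndex hl hm k)) u := by
  rw [wtCoord_zero_eq_card hl hm, ZMod.natCast_card_filter_eq_one_eq_sum, LinearMap.sum_apply]
  rfl

end Weight

theorem stmt11 (l m : ℕ) (hl : l.Prime) (hm : 1 ≤ m)
    {F : Type*} [Field F] [Fintype F] [Algebra (ZMod 2) F]
    (hcard : Fintype.card F = 2 ^ Nat.totient (l ^ m))
    (h2 : orderOf (2 : ZMod (l ^ m)) = Nat.totient (l ^ m))
    (γ : F) (hγ : orderOf γ = Fintype.card F - 1)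
    (B : Module.Basis (Fin (Nat.totient (l ^ m))) (ZMod 2) F)
    (hB : ∀ j : Fin (Nat.totient (l ^ m)),
      B j = (γ ^ ((Fintype.card F - 1) / l ^ m)) ^ ((j : ℕ) + 1))
    (a : F) (ha : a ≠ 0) :
    (∃ u : F, u ≠ 0 ∧
      Even (wtCoord l m B 0 (a * u⁻¹ ^ ((Fintype.card F - 1) / l ^ m)))) ∧
    (∃ u : F, u ≠ 0 ∧
      Odd (wtCoord l m B 0 (a * u⁻¹ ^ ((Fintype.card F - 1) / l ^ m)))) := by
  set N := (Fintype.card F - 1) / l ^ m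
  set α := γ ^ N
  have hγ1 : γ ^ (Fintype.card F - 1) = 1 := hγ ▸ pow_orderOf_eq_one γ
  have hdvd : l ^ m ∣ 2 ^ Nat.totient (l ^ m) - 1 := dvd_pow_sub_one_of_natCast_pow_eq_one
    one_le_two (by exact_mod_cast h2 ▸ pow_orderOf_eq_one (2 : ZMod (l ^ m)))
  have hodd : Odd (l ^ m) :=
    Nat.odd_of_dvd_two_pow_sub_one (Nat.totient_pos.2 (pow_pos hl.pos m)).ne' hdvd
  have hα : α ^ l ^ m = 1 := by rw [← pow_mul, Nat.div_mul_cancel (hcard ▸ hdvd), hγ1]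
  have hα1 : α ≠ 1 := B.ne_one_of_apply_eq_pow hB
    (Nat.one_lt_totient_of_odd hodd (Nat.one_lt_pow (by omega) hl.one_lt))
  have hγ0 : γ ≠ 0 :=
    ne_zero_pow (by have := Fintype.one_lt_card (α := F); omega) (hγ1 ▸ one_ne_zero)
  have hrep (i : ℕ) : (γ ^ i)⁻¹ ≠ 0 ∧ (γ ^ i)⁻¹⁻¹ ^ N = α ^ i :=
    ⟨inv_ne_zero (pow_ne_zero i hγ0), by rw [inv_inv, ← pow_mul, mul_comm, pow_mul]⟩
  have : NeZero (l - 1) := ⟨by have := hl.two_le; omega⟩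
  refine ⟨?_, ?_⟩
  · obtain ⟨i, hi⟩ := exists_apply_mul_pow_eq_zero _ hα hα1 hodd a
    refine ⟨_, (hrep i).1, ?_⟩
    rwa [← ZMod.natCast_eq_zero_iff_even, natCast_wtCoord_zero hl hm, (hrep i).2]
  · obtain ⟨i, hi⟩ := exists_apply_mul_pow_ne_zero
      (B.sum_coord_comp_ne_zero (digitIndex hl hm).injective) (B.span_range_pow_eq_top hB) ha
    refine ⟨_, (hrep i).1, ?_⟩
    rwa [← ZMod.natCast_ne_zero_iff_odd, natCast_wtCoord_zero hl hm, (hrep i).2]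

end Paper
end
end
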